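/- Let F = 𝔽_3 (ZMod 3) and let C = { (u·(2 + z + 2z²), u·(1 + z + z²)) : u ∈ F[[z]] } ⊆ F[[z]]² be the rate-1/2 convolutional code generated by G(z) = [2 + z + 2z², 1 + z + z²]. Then d_free(C) = 6. -/

import Mathlib

/-!
Over `𝔽₃` the two generators add up to `2X`, so a nonzero coefficient of `u` at `t` makes the
code symbol at time `t + 1` nonzero. Hence a codeword of finite weight comes from a nonzero
polynomial `p`. With `m` its trailing and `d` its natural degree, both entries of the code symbols
at times `m` and `d + 2` are nonzero (trailing resp. leading coefficients multiply). If `m < d`,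
the symbols at the two further times `m + 1` and `d + 1` are nonzero; if `m = d`, `p` is a
monomial and the symbol at `m + 1` has both entries nonzero. Either way the weight is at least `6`, attained by `u = 1`.
-/

open PowerSeries

/-- Hamming weight of `v ∈ F[[z]]²`: the extended-natural-number cardinality of the set
of pairs `(l, t)` with `coeff_t (v_l) ≠ 0`. -/
noncomputable def wH {F : Type*} [Field F] (v : Fin 2 → PowerSeries F) : ℕ∞ :=
  {p : Fin 2 × ℕ | PowerSeries.coeff (R := F) p.2 (v p.1) ≠ 0}.encard

section Weight

open scoped Classical

variable {F : Type*} [Field F]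

noncomputable def symbolWeight (v : Fin 2 → F⟦X⟧) (t : ℕ) : ℕ :=
  (Finset.univ.filter fun l => coeff t (v l) ≠ 0).card

theorem sum_symbolWeight_le_wH (v : Fin 2 → F⟦X⟧) (T : Finset ℕ) :
    ((∑ t ∈ T, symbolWeight v t : ℕ) : ℕ∞) ≤ wH v := by
  let S := (Finset.univ ×ˢ T).filter fun p : Fin 2 × ℕ => coeff p.2 (v p.1) ≠ 0
  have hS : S.card = ∑ t ∈ T, symbolWeight v t := by
    simp only [S, symbolWeight, Finset.card_filter, Finset.sum_product_right]
  rw [← hS, ← Set.encard_coe_eq_coe_finsetCard]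
  exact Set.encard_mono fun p hp => (Finset.mem_filter.mp hp).2

theorem symbolWeight_eq_two {v : Fin 2 → F⟦X⟧} {t : ℕ} (h₀ : coeff t (v 0) ≠ 0)
    (h₁ : coeff t (v 1) ≠ 0) : symbolWeight v t = 2 := by
  rw [symbolWeight, Finset.filter_true_of_mem (by simp [Fin.forall_fin_two, h₀, h₁])]
  rfl

theorem one_le_symbolWeight {v : Fin 2 → F⟦X⟧} {t : ℕ} {l : Fin 2} (h : coeff t (v l) ≠ 0) :
    1 ≤ symbolWeight v t :=
  Finset.card_pos.mpr ⟨l, Finset.mem_filter.mpr ⟨Finset.mem_univ l, h⟩⟩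

theorem wH_le_of_coeff_eq_zero (v : Fin 2 → F⟦X⟧) (N : ℕ)
    (h : ∀ l t, N ≤ t → coeff t (v l) = 0) : wH v ≤ 2 * N := by
  calc wH v ≤ ((Finset.univ ×ˢ Finset.range N : Finset (Fin 2 × ℕ)) : Set (Fin 2 × ℕ)).encard := by
        refine Set.encard_mono fun p hp => ?_
        simp only [Finset.coe_product, Finset.coe_univ, Finset.coe_range, Set.mem_prod,
          Set.mem_univ, Set.mem_Iio, true_and]
        by_contra hN
        exact hp (h _ _ (not_lt.mp hN))
    _ = 2 * N := by rw [Set.encard_coe_eq_coe_finsetCard]; simp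

theorem exists_coeff_eq_zero_of_wH_ne_top {v : Fin 2 → F⟦X⟧} (h : wH v ≠ ⊤) :
    ∃ N, ∀ l t, N ≤ t → coeff t (v l) = 0 := by
  obtain ⟨N, hN⟩ := ((Set.encard_ne_top_iff.mp h).image Prod.snd).bddAbove
  refine ⟨N + 1, fun l t ht => ?_⟩
  by_contra hne
  have := hN ⟨(l, t), hne, rfl⟩
  omega

theorem wH_zero : wH (0 : Fin 2 → F⟦X⟧) = 0 := by
  simp [wH]

end Weight

theorem PowerSeries.eq_coe_trunc_of_coeff_eq_zero {R : Type*} [Semiring R] {u : R⟦X⟧} {N : ℕ}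
    (h : ∀ n, N ≤ n → coeff n u = 0) : u = trunc N u := by
  ext n
  rw [Polynomial.coeff_coe, coeff_trunc]
  split_ifs with hn
  · rfl
  · exact h n (not_lt.mp hn)

namespace Polynomial

theorem eq_C_mul_X_pow_of_natTrailingDegree_eq_natDegree {R : Type*} [Semiring R]
    {p : Polynomial R} (h : p.natTrailingDegree = p.natDegree) :
    p = Polynomial.C p.leadingCoeff * Polynomial.X ^ p.natDegree := by
  ext n
  rw [Polynomial.coeff_C_mul_X_pow]
  split_ifs with hn
  · rw [hn, Polynomial.coeff_natDegree]
  · rcases lt_or_gt_of_ne hn with hlt | hgt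
    · exact Polynomial.coeff_eq_zero_of_lt_natTrailingDegree (h ▸ hlt)
    · exact Polynomial.coeff_eq_zero_of_natDegree_lt hgt

theorem coe_ofNat {R : Type*} [Semiring R] (n : ℕ) [n.AtLeastTwo] :
    ((ofNat(n) : Polynomial R) : R⟦X⟧) = OfNat.ofNat n :=
  map_ofNat Polynomial.coeToPowerSeries.ringHom n

section NoZeroDivisors

variable {R : Type*} [Semiring R] [NoZeroDivisors R] {p g : Polynomial R}

theorem coeff_mul_natTrailingDegree_ne_zero (hp : p ≠ 0) (hg : g.coeff 0 ≠ 0) :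
    (p * g).coeff p.natTrailingDegree ≠ 0 := by
  have hg0 : g.natTrailingDegree = 0 := Polynomial.natTrailingDegree_eq_zero.mpr (.inr hg)
  have := Polynomial.coeff_mul_natTrailingDegree_add_natTrailingDegree (p := p) (q := g)
  rw [hg0, add_zero] at this
  rw [this]
  exact mul_ne_zero (Polynomial.trailingCoeff_nonzero_iff_nonzero.mpr hp)
    (Polynomial.trailingCoeff_nonzero_iff_nonzero.mpr (by rintro rfl; simp at hg))

theorem coeff_mul_natDegree_add_natDegree_ne_zero (hp : p ≠ 0) (hg : g ≠ 0) :
    (p * g).coeff (p.natDegree + g.natDegree) ≠ 0 := by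
  rw [Polynomial.coeff_mul_degree_add_degree]
  exact mul_ne_zero (Polynomial.leadingCoeff_ne_zero.mpr hp)
    (Polynomial.leadingCoeff_ne_zero.mpr hg)

end NoZeroDivisors

end Polynomial

noncomputable def codeword (u : (ZMod 3)⟦X⟧) : Fin 2 → (ZMod 3)⟦X⟧ :=
  ![u * (2 + X + 2 * X ^ 2), u * (1 + X + X ^ 2)]

noncomputable def g₁ : Polynomial (ZMod 3) := 2 + Polynomial.X + 2 * Polynomial.X ^ 2
noncomputable def g₂ : Polynomial (ZMod 3) := 1 + Polynomial.X + Polynomial.X ^ 2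

theorem coe_g₁ : (g₁ : (ZMod 3)⟦X⟧) = 2 + X + 2 * X ^ 2 := by simp [g₁, Polynomial.coe_ofNat]
theorem coe_g₂ : (g₂ : (ZMod 3)⟦X⟧) = 1 + X + X ^ 2 := by simp [g₂]
theorem natDegree_g₁ : g₁.natDegree = 2 := by unfold g₁; compute_degree!
theorem natDegree_g₂ : g₂.natDegree = 2 := by unfold g₂; compute_degree!
theorem g₁_ne_zero : g₁ ≠ 0 := fun h => by simpa [h] using natDegree_g₁
theorem g₂_ne_zero : g₂ ≠ 0 := fun h => by simpa [h] using natDegree_g₂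
theorem coeff_g₁_zero : g₁.coeff 0 = 2 := by simp [g₁]
theorem coeff_g₂_zero : g₂.coeff 0 = 1 := by simp [g₂]
theorem coeff_g₁_one : g₁.coeff 1 = 1 := by simp [g₁, Polynomial.coeff_X]
theorem coeff_g₂_one : g₂.coeff 1 = 1 := by simp [g₂, Polynomial.coeff_X, Polynomial.coeff_one]

theorem coeff_codeword_coe_zero (p : Polynomial (ZMod 3)) (t : ℕ) :
    coeff t (codeword p 0) = (p * g₁).coeff t := by
  rw [← Polynomial.coeff_coe, Polynomial.coe_mul, coe_g₁]; rfl

theorem coeff_codeword_coe_one (p : Polynomial (ZMod 3)) (t : ℕ) :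
    coeff t (codeword p 1) = (p * g₂).coeff t := by
  rw [← Polynomial.coeff_coe, Polynomial.coe_mul, coe_g₂]; rfl

theorem coeff_codeword_zero_add_one (u : (ZMod 3)⟦X⟧) (t : ℕ) :
    coeff (t + 1) (codeword u 0) + coeff (t + 1) (codeword u 1) = 2 * coeff t u := by
  have h3 : (3 : (ZMod 3)⟦X⟧) = 0 := by
    rw [← map_ofNat C 3, show (3 : ZMod 3) = 0 from rfl, map_zero]
  have hsum : codeword u 0 + codeword u 1 = C 2 * (X * u) := by
    show u * (2 + X + 2 * X ^ 2) + u * (1 + X + X ^ 2) = _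
    rw [map_ofNat C 2]
    linear_combination (u * (1 + X ^ 2)) * h3
  rw [← map_add, hsum, coeff_C_mul, coeff_succ_X_mul]

theorem coeff_eq_zero_of_coeff_codeword_eq_zero {u : (ZMod 3)⟦X⟧} {t : ℕ}
    (h₀ : coeff (t + 1) (codeword u 0) = 0) (h₁ : coeff (t + 1) (codeword u 1) = 0) :
    coeff t u = 0 := by
  have := coeff_codeword_zero_add_one u t
  rw [h₀, h₁, add_zero, eq_comm, mul_eq_zero] at this
  exact this.resolve_left (by decide)

theorem one_le_symbolWeight_codeword {u : (ZMod 3)⟦X⟧} {t : ℕ} (h : coeff t u ≠ 0) :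
    1 ≤ symbolWeight (codeword u) (t + 1) := by
  by_cases h₀ : coeff (t + 1) (codeword u 0) = 0
  · exact one_le_symbolWeight (l := 1) fun h₁ => h (coeff_eq_zero_of_coeff_codeword_eq_zero h₀ h₁)
  · exact one_le_symbolWeight h₀

theorem symbolWeight_codeword_natTrailingDegree {p : Polynomial (ZMod 3)} (hp : p ≠ 0) :
    symbolWeight (codeword p) p.natTrailingDegree = 2 := by
  refine symbolWeight_eq_two ?_ ?_
  · rw [coeff_codeword_coe_zero]
    exact Polynomial.coeff_mul_natTrailingDegree_ne_zero hp (by rw [coeff_g₁_zero]; decide)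
  · rw [coeff_codeword_coe_one]
    exact Polynomial.coeff_mul_natTrailingDegree_ne_zero hp (by rw [coeff_g₂_zero]; decide)

theorem symbolWeight_codeword_natDegree_add_two {p : Polynomial (ZMod 3)} (hp : p ≠ 0) :
    symbolWeight (codeword p) (p.natDegree + 2) = 2 := by
  refine symbolWeight_eq_two ?_ ?_
  · rw [coeff_codeword_coe_zero, ← natDegree_g₁]
    exact Polynomial.coeff_mul_natDegree_add_natDegree_ne_zero hp g₁_ne_zero
  · rw [coeff_codeword_coe_one, ← natDegree_g₂]
    exact Polynomial.coeff_mul_natDegree_add_natDegree_ne_zero hp g₂_ne_zero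

theorem symbolWeight_codeword_natTrailingDegree_add_one {p : Polynomial (ZMod 3)} (hp : p ≠ 0)
    (h : p.natTrailingDegree = p.natDegree) :
    symbolWeight (codeword p) (p.natTrailingDegree + 1) = 2 := by
  have hmono := Polynomial.eq_C_mul_X_pow_of_natTrailingDegree_eq_natDegree h
  have hcoeff (g : Polynomial (ZMod 3)) :
      (p * g).coeff (p.natTrailingDegree + 1) = p.leadingCoeff * g.coeff 1 := by
    rw [h, add_comm]
    nth_rw 1 [hmono]
    rw [mul_assoc, Polynomial.coeff_C_mul, Polynomial.coeff_X_pow_mul]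
  have ha : p.leadingCoeff ≠ 0 := Polynomial.leadingCoeff_ne_zero.mpr hp
  refine symbolWeight_eq_two ?_ ?_
  · rwa [coeff_codeword_coe_zero, hcoeff, coeff_g₁_one, mul_one]
  · rwa [coeff_codeword_coe_one, hcoeff, coeff_g₂_one, mul_one]

theorem six_le_wH_codeword_coe {p : Polynomial (ZMod 3)} (hp : p ≠ 0) :
    6 ≤ wH (codeword p) := by
  set m := p.natTrailingDegree
  set d := p.natDegree
  have hm : symbolWeight (codeword p) m = 2 := symbolWeight_codeword_natTrailingDegree hp
  have hd : symbolWeight (codeword p) (d + 2) = 2 := symbolWeight_codeword_natDegree_add_two hp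
  rcases (Polynomial.natTrailingDegree_le_natDegree p).lt_or_eq with hlt | heq
  · have hm₁ := one_le_symbolWeight_codeword (u := p) (t := m) (by simpa [m] using hp)
    have hd₁ := one_le_symbolWeight_codeword (u := p) (t := d) (by simpa [d] using hp)
    calc (6 : ℕ∞) ≤ ((∑ t ∈ {m, m + 1, d + 1, d + 2}, symbolWeight (codeword p) t : ℕ) : ℕ∞) := by
          rw [Finset.sum_insert (by simp; omega), Finset.sum_insert (by simp; omega),
            Finset.sum_pair (by omega)]
          exact_mod_cast (by omega)
      _ ≤ wH (codeword p) := sum_symbolWeight_le_wH _ _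
  · have hm₁ : symbolWeight (codeword p) (m + 1) = 2 :=
      symbolWeight_codeword_natTrailingDegree_add_one hp heq
    replace hd : symbolWeight (codeword p) (m + 2) = 2 := by rwa [show m = d from heq]
    calc (6 : ℕ∞) ≤ ((∑ t ∈ {m, m + 1, m + 2}, symbolWeight (codeword p) t : ℕ) : ℕ∞) := by
          rw [Finset.sum_insert (by simp), Finset.sum_pair (by omega)]
          exact_mod_cast (by omega)
      _ ≤ wH (codeword p) := sum_symbolWeight_le_wH _ _

theorem six_le_wH_codeword {u : (ZMod 3)⟦X⟧} (hu : u ≠ 0) : 6 ≤ wH (codeword u) := by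
  by_cases htop : wH (codeword u) = ⊤
  · exact htop ▸ le_top
  obtain ⟨N, hN⟩ := exists_coeff_eq_zero_of_wH_ne_top htop
  have hu_poly : u = trunc N u := PowerSeries.eq_coe_trunc_of_coeff_eq_zero fun t ht =>
    coeff_eq_zero_of_coeff_codeword_eq_zero (hN 0 _ (by omega)) (hN 1 _ (by omega))
  rw [hu_poly] at hu ⊢
  exact six_le_wH_codeword_coe fun h => hu (by rw [h, Polynomial.coe_zero])

theorem wH_codeword_one : wH (codeword 1) = 6 := by
  refine le_antisymm ?_ (six_le_wH_codeword one_ne_zero)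
  rw [← Polynomial.coe_one]
  refine (wH_le_of_coeff_eq_zero _ 3 fun l t ht => ?_).trans_eq (by norm_num)
  fin_cases l
  · rw [Fin.zero_eta, coeff_codeword_coe_zero, one_mul]
    exact Polynomial.coeff_eq_zero_of_natDegree_lt (by rw [natDegree_g₁]; omega)
  · rw [Fin.mk_one, coeff_codeword_coe_one, one_mul]
    exact Polynomial.coeff_eq_zero_of_natDegree_lt (by rw [natDegree_g₂]; omega)

/-- the rate-1/2 convolutional code over `ZMod 3` generated by
`G(z) = [2 + X + 2 * X ^ 2, 1 + X + X ^ 2]` has free distance `6`. -/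
theorem dfree_eq_13 :
    sInf {w : ℕ∞ | ∃ v : Fin 2 → PowerSeries (ZMod 3),
      (∃ u : PowerSeries (ZMod 3), v = ![u * (2 + X + 2 * X ^ 2), u * (1 + X + X ^ 2)]) ∧
      v ≠ 0 ∧ w = wH v} = 6 := by
  refine le_antisymm (sInf_le ⟨codeword 1, ⟨1, rfl⟩, fun h => ?_, wH_codeword_one.symm⟩)
    (le_sInf ?_)
  · have h6 := wH_codeword_one
    rw [h, wH_zero] at h6
    exact absurd h6 (by decide)
  · rintro w ⟨v, ⟨u, rfl⟩, hv, rfl⟩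
    exact six_le_wH_codeword fun hu => hv (by simp [hu])
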